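/- Splitting lemma for Γ (base of Lemma 2): Let u be a vertex with a single child u_1, parent edge e_u, ξ ≥ 0, k ≥ 1, l ≥ 0. Then Γ_ξ(u,k,l) equals: min{ξ·ω(T_{u_1})+c(uu_1), Γ_ξ(u_1,k,l)} if μ_ξ(u_1,k−1,l) = 1, and Γ_ξ(u_1,k,l) otherwise. -/

import Mathlib

open scoped Classical

noncomputable section

/-- A finite rooted weighted tree, encoded by a parent function. The root has an
auxiliary parent edge `e_root` of weight `0` (`parent root = root`). Edges are
identified with their lower endpoints: the parent edge `e_v` of a vertex `v`
has weight `c v`. -/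
structure RTree (V : Type) [Fintype V] [DecidableEq V] where
  root : V
  parent : V → V
  w : V → ℚ
  c : V → ℚ
  parent_root : parent root = root
  reaches_root : ∀ v : V, ∃ n : ℕ, parent^[n] v = root
  w_pos : ∀ v : V, 0 < w v
  c_pos : ∀ v : V, v ≠ root → 0 < c v
  c_root : c root = 0

namespace RTree

variable {V : Type} [Fintype V] [DecidableEq V] (T : RTree V)

/-- `v` lies in the subtree rooted at `u` (equivalently, edge `e_v ≤ e_u` in the
natural partial order induced by the root). -/
def below (u v : V) : Prop := ∃ n : ℕ, T.parent^[n] v = u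

/-- The vertex set of the subtree `T_u` (also of `T_{e_u}`). -/
def desc (u : V) : Finset V := Finset.univ.filter (fun v => T.below u v)

/-- Total vertex weight `ω(A)`. -/
def wsum (A : Finset V) : ℚ := ∑ v ∈ A, T.w v

/-- The (lower endpoints of) edges with exactly one endpoint in `A`, relative to a
ground set `W` of edges/vertices (`W = univ` gives the whole tree `T`). -/
def boundaryW (W A : Finset V) : Finset V :=
  W.filter (fun v => Xor' (v ∈ A) (T.parent v ∈ A))

/-- The edge boundary `∂A` in the whole tree. -/
def boundary (A : Finset V) : Finset V := T.boundaryW Finset.univ A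

/-- `c(∂A)` relative to ground set `W`. -/
def cutW (W A : Finset V) : ℚ := ∑ v ∈ T.boundaryW W A, T.c v

/-- `c(∂A)` in the whole tree. -/
def cut (A : Finset V) : ℚ := T.cutW Finset.univ A

/-- Vertex set of the subtree `T_u` relative to the ground set `W`. -/
def descW (W : Finset V) (u : V) : Finset V := T.desc u ∩ W

/-- `ε_ξ(e_v) = ξ·ω(T_{e_v}) + c(e_v)`. -/
def eps (ξ : ℚ) (v : V) : ℚ := ξ * T.wsum (T.desc v) + T.c v

/-- `A` induces a connected subgraph (a subtree) of the tree: some `a ∈ A` is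
reachable from every `v ∈ A` by a parent-chain staying inside `A`. -/
def connectedIn (A : Finset V) : Prop :=
  ∃ a ∈ A, ∀ v ∈ A, ∃ n : ℕ, T.parent^[n] v = a ∧ ∀ m : ℕ, m ≤ n → T.parent^[m] v ∈ A

/-- The children of a vertex. -/
def children (u : V) : Finset V :=
  Finset.univ.filter (fun v => T.parent v = u ∧ v ≠ u)

/-- `A` witnesses `μ_ξ(u,k,l) = 1` relative to ground set `W`: a connected
`k`-subpartition of `T_u` whose parts all have conductance at most `ξ`
(boundaries computed in the ground set), with at most `l` residue vertices. -/
def muWitnessW (W : Finset V) (ξ : ℚ) (u : V) {k : ℕ} (A : Fin k → Finset V) (l : ℕ) : Prop :=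
  (∀ i, (A i).Nonempty) ∧ (∀ i j, i ≠ j → Disjoint (A i) (A j)) ∧
  (∀ i, A i ⊆ T.descW W u) ∧ (∀ i, T.connectedIn (A i)) ∧
  (∀ i, T.cutW W (A i) / T.wsum (A i) ≤ ξ) ∧
  ((T.descW W u \ Finset.univ.biUnion A).card ≤ l)

/-- `μ_ξ(u,k,l) = 1` relative to ground set `W`. -/
def muW (W : Finset V) (ξ : ℚ) (u : V) (k l : ℕ) : Prop :=
  ∃ A : Fin k → Finset V, T.muWitnessW W ξ u A l

/-- `A` witnesses `μ_ξ(u,k,l) = 1` (in the whole tree `T`). -/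
def muWitness (ξ : ℚ) (u : V) {k : ℕ} (A : Fin k → Finset V) (l : ℕ) : Prop :=
  T.muWitnessW Finset.univ ξ u A l

/-- `μ_ξ(u,k,l) = 1`. -/
def mu (ξ : ℚ) (u : V) (k l : ℕ) : Prop := T.muW Finset.univ ξ u k l

/-- Membership in `𝒞_ξ(u,k,l)` relative to ground set `W`: a connected
`k`-subpartition of `T_u` with `u ∈ A₁`, residue at most `l`, and conductance
at most `ξ` for every part other than `A₁`. -/
def inCW (W : Finset V) (ξ : ℚ) (u : V) {k : ℕ} (A : Fin k → Finset V) (l : ℕ) : Prop :=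
  (∀ i, (A i).Nonempty) ∧ (∀ i j, i ≠ j → Disjoint (A i) (A j)) ∧
  (∀ i, A i ⊆ T.descW W u) ∧ (∀ i, T.connectedIn (A i)) ∧
  (∀ h : 0 < k, u ∈ A ⟨0, h⟩) ∧
  (∀ i : Fin k, i.val ≠ 0 → T.cutW W (A i) / T.wsum (A i) ≤ ξ) ∧
  ((T.descW W u \ Finset.univ.biUnion A).card ≤ l)

/-- Membership in `𝒞_ξ(u,k,l)`. -/
def inC (ξ : ℚ) (u : V) {k : ℕ} (A : Fin k → Finset V) (l : ℕ) : Prop :=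
  T.inCW Finset.univ ξ u A l

/-- `γ_ξ(𝒜) = Σ_{e ∈ ∂A₁ \ {e_u}} ε_ξ(e)` relative to ground set `W`. -/
def gammaValW (W : Finset V) (ξ : ℚ) (u : V) (A1 : Finset V) : ℚ :=
  ∑ v ∈ (T.boundaryW W A1).erase u, (ξ * T.wsum (T.descW W v) + T.c v)

/-- `γ_ξ(𝒜) = Σ_{e ∈ ∂A₁ \ {e_u}} ε_ξ(e)`. -/
def gammaVal (ξ : ℚ) (u : V) (A1 : Finset V) : ℚ := T.gammaValW Finset.univ ξ u A1

/-- `Γ_ξ(u,k,l) = min over 𝒞_ξ(u,k,l) of γ_ξ`, with value `+∞` (`⊤` of `EReal`)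
when `𝒞_ξ(u,k,l)` is empty, relative to ground set `W`. -/
def GammaW (W : Finset V) (ξ : ℚ) (u : V) (k l : ℕ) : EReal :=
  sInf {x : EReal | ∃ (h : 0 < k) (A : Fin k → Finset V),
    T.inCW W ξ u A l ∧ x = ((T.gammaValW W ξ u (A ⟨0, h⟩) : ℝ) : EReal)}

/-- `Γ_ξ(u,k,l)`. -/
def Gamma (ξ : ℚ) (u : V) (k l : ℕ) : EReal := T.GammaW Finset.univ ξ u k l

end RTree

/-!
Since `u₁` is the only child of `u`, `T_u = {u} ∪ T_{u₁}`. Let `A ∈ 𝒞_ξ(u,k,l)`. As `A₁ ∋ u`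
is connected, either `A₁ = {u}`, and then `A₂, …, A_k` witness `μ_ξ(u₁,k−1,l) = 1` while
`γ_ξ(A) = ε_ξ(uu₁)`; or `u₁ ∈ A₁`, and then removing `u` from `A₁` gives a member of
`𝒞_ξ(u₁,k,l)` with the same `γ_ξ`, because `∂A₁` and `∂(A₁ \ {u})` differ only in the parent
edges `e_u` and `e_{u₁}`, which `γ_ξ` ignores. Both constructions can be reversed, so the values
of `γ_ξ` at `u` are those at `u₁`, together with `ε_ξ(uu₁)` exactly when `μ_ξ(u₁,k−1,l) = 1`.
-/

namespace RTree

variable {V : Type} [Fintype V] [DecidableEq V]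

section

variable (T : RTree V)

lemma iterate_parent_root (n : ℕ) : T.parent^[n] T.root = T.root :=
  Function.iterate_fixed T.parent_root n

lemma eq_root_of_iterate_parent_eq_self {b : V} {p : ℕ} (hp : 0 < p)
    (h : T.parent^[p] b = b) : b = T.root := by
  obtain ⟨j, hj⟩ := T.reaches_root b
  calc b = T.parent^[p * j] b := (Function.IsPeriodicPt.mul_const h j).eq.symm
    _ = T.parent^[p * j - j] (T.parent^[j] b) := by
        rw [← Function.iterate_add_apply, Nat.sub_add_cancel (Nat.le_mul_of_pos_left j hp)]
    _ = T.root := by rw [hj, T.iterate_parent_root]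

end

variable {T : RTree V}

lemma below_refl (u : V) : T.below u u := ⟨0, rfl⟩

lemma below_trans {a b c : V} (h₁ : T.below a b) (h₂ : T.below b c) : T.below a c := by
  obtain ⟨n, hn⟩ := h₁
  obtain ⟨m, hm⟩ := h₂
  exact ⟨n + m, by rw [Function.iterate_add_apply, hm, hn]⟩

lemma below_of_below_parent {a v : V} (h : T.below a (T.parent v)) : T.below a v := by
  obtain ⟨n, hn⟩ := h
  exact ⟨n + 1, by rwa [Function.iterate_succ_apply]⟩

lemma below_parent (v : V) : T.below (T.parent v) v := ⟨1, rfl⟩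

lemma below_antisymm {a b : V} (h₁ : T.below a b) (h₂ : T.below b a) : a = b := by
  obtain ⟨n, hn⟩ := h₁
  obtain ⟨m, hm⟩ := h₂
  rcases Nat.eq_zero_or_pos (m + n) with h0 | hpos
  · obtain ⟨-, rfl⟩ := Nat.add_eq_zero_iff.mp h0
    exact hn.symm
  · have hb : b = T.root := T.eq_root_of_iterate_parent_eq_self hpos
      (by rw [Function.iterate_add_apply, hn, hm])
    rw [← hn, hb, T.iterate_parent_root]

lemma mem_desc {u v : V} : v ∈ T.desc u ↔ T.below u v := by
  simp [desc]

lemma mem_children {u v : V} : v ∈ T.children u ↔ T.parent v = u ∧ v ≠ u := by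
  simp [children]

lemma children_eq_singleton_iff {u u₁ : V} :
    T.children u = {u₁} ↔ ∀ v, T.parent v = u ∧ v ≠ u ↔ v = u₁ := by
  simp [Finset.ext_iff, mem_children]

lemma exists_mem_children_of_iterate_parent {u v : V} {n : ℕ} (hn : T.parent^[n] v = u)
    (hv : v ≠ u) :
    ∃ m < n, T.parent^[m] v ∈ T.children u ∧ ∀ j ≤ m, T.parent^[j] v ≠ u := by
  classical
  have hex : ∃ n, T.parent^[n] v = u := ⟨n, hn⟩
  have hpos : Nat.find hex ≠ 0 := fun h0 => hv (by simpa [h0] using Nat.find_spec hex)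
  refine ⟨Nat.find hex - 1, by have := Nat.find_min' hex hn; omega, mem_children.mpr ⟨?_, ?_⟩,
    fun j hj => Nat.find_min hex (by omega)⟩
  · rw [← Function.iterate_succ_apply' T.parent, Nat.succ_eq_add_one, Nat.sub_add_cancel
      (Nat.pos_of_ne_zero hpos)]
    exact Nat.find_spec hex
  · exact Nat.find_min hex (by omega)

lemma connectedIn_singleton (u : V) : T.connectedIn {u} :=
  ⟨u, Finset.mem_singleton_self u, fun v hv => ⟨0, by simpa using hv, fun m hm => by
    simpa [Nat.le_zero.mp hm] using hv⟩⟩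

lemma connectedIn.chain_to_top {A : Finset V} (hA : T.connectedIn A) {a : V} (ha : a ∈ A)
    (hsub : A ⊆ T.desc a) :
    ∀ v ∈ A, ∃ n, T.parent^[n] v = a ∧ ∀ m ≤ n, T.parent^[m] v ∈ A := by
  obtain ⟨b, hb, hchain⟩ := hA
  obtain ⟨n, hn, -⟩ := hchain a ha
  obtain rfl : a = b := below_antisymm (mem_desc.mp (hsub hb)) ⟨n, hn⟩
  exact hchain

lemma connectedIn_insert_parent {B : Finset V} {u₁ : V} (hB : T.connectedIn B)
    (hu₁ : u₁ ∈ B) (hsub : B ⊆ T.desc u₁) : T.connectedIn (insert (T.parent u₁) B) := by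
  refine ⟨T.parent u₁, Finset.mem_insert_self _ _, fun v hv => ?_⟩
  rcases Finset.mem_insert.mp hv with rfl | hvB
  · exact ⟨0, rfl, fun m hm => by simp [Nat.le_zero.mp hm]⟩
  obtain ⟨n, hn, hall⟩ := hB.chain_to_top hu₁ hsub v hvB
  refine ⟨n + 1, by rw [Function.iterate_succ_apply', hn], fun m hm => ?_⟩
  rcases Nat.lt_or_ge m (n + 1) with h | h
  · exact Finset.mem_insert_of_mem (hall m (by omega))
  · rw [show m = n + 1 by omega, Function.iterate_succ_apply', hn]
    exact Finset.mem_insert_self _ _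

lemma mem_boundary {A : Finset V} {v : V} :
    v ∈ T.boundary A ↔ (v ∈ A ∧ T.parent v ∉ A) ∨ (T.parent v ∈ A ∧ v ∉ A) := by
  simp only [boundary, boundaryW, Finset.mem_filter, Finset.mem_univ, true_and]
  exact Iff.rfl

section

variable (T)

def IsClusterFamily (ξ : ℚ) {n : ℕ} (C : Fin n → Finset V) : Prop :=
  (∀ i, (C i).Nonempty) ∧ (∀ i j, i ≠ j → Disjoint (C i) (C j)) ∧
  (∀ i, T.connectedIn (C i)) ∧ (∀ i, T.cut (C i) / T.wsum (C i) ≤ ξ)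

/-- The values `γ_ξ(A)` over `A ∈ 𝒞_ξ(v, n + 1, l)`, with `A = (A₀, C₁, …, Cₙ)`. -/
def gammaValues (ξ : ℚ) (v : V) (n l : ℕ) : Set ℚ :=
  {q | ∃ (A₀ : Finset V) (C : Fin n → Finset V),
    T.inC ξ v (Fin.cons A₀ C : Fin (n + 1) → Finset V) l ∧ q = T.gammaVal ξ v A₀}

end

lemma descW_univ (u : V) : T.descW Finset.univ u = T.desc u :=
  Finset.inter_univ _

lemma muWitness_iff {ξ : ℚ} {v : V} {n l : ℕ} {C : Fin n → Finset V} :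
    T.muWitness ξ v C l ↔ T.IsClusterFamily ξ C ∧ (∀ i, C i ⊆ T.desc v) ∧
      (T.desc v \ Finset.univ.biUnion C).card ≤ l := by
  simp only [muWitness, muWitnessW, IsClusterFamily, descW_univ, cut]
  tauto

lemma inC_cons_iff {ξ : ℚ} {v : V} {n l : ℕ} {A₀ : Finset V} {C : Fin n → Finset V} :
    T.inC ξ v (Fin.cons A₀ C : Fin (n + 1) → Finset V) l ↔
      (v ∈ A₀ ∧ A₀ ⊆ T.desc v ∧ T.connectedIn A₀) ∧ T.IsClusterFamily ξ C ∧
      (∀ i, C i ⊆ T.desc v ∧ Disjoint A₀ (C i)) ∧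
      (T.desc v \ (A₀ ∪ Finset.univ.biUnion C)).card ≤ l := by
  have hunion : Finset.univ.biUnion (Fin.cons A₀ C : Fin (n + 1) → Finset V) =
      A₀ ∪ Finset.univ.biUnion C := by
    ext x; simp [Fin.exists_fin_succ]
  simp only [inC, inCW, IsClusterFamily, descW_univ, hunion, Fin.forall_fin_succ, Fin.cons_zero,
    Fin.cons_succ, cut, Fin.zero_eta, Fin.val_zero, Fin.val_succ, ne_eq, Fin.succ_ne_zero,
    Fin.succ_inj, not_true_eq_false, IsEmpty.forall_iff, not_false_eq_true, forall_const,
    (Fin.succ_ne_zero _).symm, Nat.add_one_ne_zero, Nat.zero_lt_succ, true_and]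
  constructor
  · rintro ⟨⟨-, hne⟩, ⟨hd₀, hd⟩, ⟨hA₀, hC⟩, ⟨hc₀, hc⟩, hv, hcond, hres⟩
    exact ⟨⟨hv, hA₀, hc₀⟩, ⟨hne, fun i => (hd i).2, hc, hcond⟩, fun i => ⟨hC i, hd₀ i⟩, hres⟩
  · rintro ⟨⟨hv, hA₀, hc₀⟩, ⟨hne, hd, hc, hcond⟩, hC, hres⟩
    exact ⟨⟨⟨v, hv⟩, hne⟩, ⟨fun i => (hC i).2, fun i => ⟨(hC i).2.symm, hd i⟩⟩,
      ⟨hA₀, fun i => (hC i).1⟩, ⟨hc₀, hc⟩, hv, hcond, hres⟩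

lemma Gamma_succ (ξ : ℚ) (v : V) (n l : ℕ) :
    T.Gamma ξ v (n + 1) l = sInf ((fun q : ℚ => ((q : ℝ) : EReal)) '' T.gammaValues ξ v n l) := by
  refine congrArg sInf (Set.ext fun x => ⟨?_, ?_⟩)
  · rintro ⟨-, A, hA, rfl⟩
    refine ⟨T.gammaVal ξ v (A 0), ⟨A 0, Fin.tail A, ?_, rfl⟩, rfl⟩
    rwa [Fin.cons_self_tail]
  · rintro ⟨_, ⟨A₀, C, hA, rfl⟩, rfl⟩
    exact ⟨n.succ_pos, Fin.cons A₀ C, hA, rfl⟩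

section UniqueChild

variable {u u₁ : V}

lemma parent_eq_and_ne_of_children_eq (h : T.children u = {u₁}) :
    T.parent u₁ = u ∧ u₁ ≠ u :=
  (children_eq_singleton_iff.mp h u₁).mpr rfl

lemma exists_iterate_parent_eq_child (h : T.children u = {u₁}) {v : V} {n : ℕ}
    (hn : T.parent^[n] v = u) (hv : v ≠ u) :
    ∃ m < n, T.parent^[m] v = u₁ ∧ ∀ j ≤ m, T.parent^[j] v ≠ u := by
  obtain ⟨m, hmn, hm, hne⟩ := exists_mem_children_of_iterate_parent hn hv
  exact ⟨m, hmn, Finset.mem_singleton.mp (h ▸ hm), hne⟩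

lemma desc_eq_insert_desc_child (h : T.children u = {u₁}) :
    T.desc u = insert u (T.desc u₁) := by
  ext v
  rw [Finset.mem_insert, mem_desc, mem_desc]
  constructor
  · rintro ⟨n, hn⟩
    refine or_iff_not_imp_left.mpr fun hv => ?_
    obtain ⟨m, -, hm, -⟩ := exists_iterate_parent_eq_child h hn hv
    exact ⟨m, hm⟩
  · rintro (rfl | hv)
    · exact below_refl v
    · exact below_trans ((parent_eq_and_ne_of_children_eq h).1 ▸ below_parent u₁) hv

lemma notMem_desc_child (h : T.children u = {u₁}) : u ∉ T.desc u₁ := fun hu =>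
  have ⟨hp, hne⟩ := parent_eq_and_ne_of_children_eq h
  hne (below_antisymm (mem_desc.mp hu) (hp ▸ below_parent u₁))

lemma parent_notMem_desc_child (h : T.children u = {u₁}) : T.parent u ∉ T.desc u₁ :=
  fun hu => notMem_desc_child h (mem_desc.mpr (below_of_below_parent (mem_desc.mp hu)))

lemma eq_singleton_of_child_notMem (h : T.children u = {u₁}) {A : Finset V}
    (hA : T.connectedIn A) (hu : u ∈ A) (hsub : A ⊆ T.desc u) (hu₁ : u₁ ∉ A) : A = {u} := by
  refine Finset.eq_singleton_iff_unique_mem.mpr ⟨hu, fun v hv => by_contra fun hvu => hu₁ ?_⟩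
  obtain ⟨n, hn, hall⟩ := hA.chain_to_top hu hsub v hv
  obtain ⟨m, hmn, rfl, -⟩ := exists_iterate_parent_eq_child h hn hvu
  exact hall m hmn.le

lemma connectedIn_erase_of_child_mem (h : T.children u = {u₁}) {A : Finset V}
    (hA : T.connectedIn A) (hu : u ∈ A) (hsub : A ⊆ T.desc u) (hu₁ : u₁ ∈ A) :
    T.connectedIn (A.erase u) := by
  refine ⟨u₁, Finset.mem_erase.mpr ⟨(parent_eq_and_ne_of_children_eq h).2, hu₁⟩,
    fun v hv => ?_⟩
  obtain ⟨hvu, hvA⟩ := Finset.mem_erase.mp hv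
  obtain ⟨n, hn, hall⟩ := hA.chain_to_top hu hsub v hvA
  obtain ⟨m, hmn, hm, hne⟩ := exists_iterate_parent_eq_child h hn hvu
  exact ⟨m, hm, fun j hj => Finset.mem_erase.mpr ⟨hne j hj, hall j (by omega)⟩⟩

lemma connectedIn_insert_iff (h : T.children u = {u₁}) {B : Finset V} (hu₁ : u₁ ∈ B)
    (hsub : B ⊆ T.desc u₁) : T.connectedIn (insert u B) ↔ T.connectedIn B := by
  have hp := (parent_eq_and_ne_of_children_eq h).1
  have huB : u ∉ B := fun hu => notMem_desc_child h (hsub hu)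
  refine ⟨fun hB => ?_, fun hB => hp ▸ connectedIn_insert_parent hB hu₁ hsub⟩
  have hsub' : insert u B ⊆ T.desc u := by
    rw [desc_eq_insert_desc_child h]
    exact Finset.insert_subset_insert u hsub
  simpa [huB] using connectedIn_erase_of_child_mem h hB (Finset.mem_insert_self u B) hsub'
    (Finset.mem_insert_of_mem hu₁)

lemma boundary_singleton_erase (h : T.children u = {u₁}) :
    (T.boundary {u}).erase u = {u₁} := by
  ext w
  have := children_eq_singleton_iff.mp h w
  simp only [Finset.mem_erase, mem_boundary, Finset.mem_singleton] at this ⊢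
  by_cases hwu : w = u <;> simp_all

lemma boundary_insert_erase (h : T.children u = {u₁}) {B : Finset V} (hu₁ : u₁ ∈ B)
    (hsub : B ⊆ T.desc u₁) : (T.boundary (insert u B)).erase u = (T.boundary B).erase u₁ := by
  obtain ⟨hp, hne⟩ := parent_eq_and_ne_of_children_eq h
  have huB : u ∉ B := fun hu => notMem_desc_child h (hsub hu)
  have hpuB : T.parent u ∉ B := fun hu => parent_notMem_desc_child h (hsub hu)
  ext w
  simp only [Finset.mem_erase, mem_boundary, Finset.mem_insert]
  by_cases hwu : w = u
  · subst hwu; simp [huB, hpuB]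
  by_cases hw₁ : w = u₁
  · subst hw₁; simp [hp, hne, hu₁]
  have hpw : T.parent w ≠ u := fun hpw => hw₁ ((children_eq_singleton_iff.mp h w).mp ⟨hpw, hwu⟩)
  simp [hwu, hw₁, hpw]

lemma gammaVal_singleton (h : T.children u = {u₁}) (ξ : ℚ) :
    T.gammaVal ξ u {u} = T.eps ξ u₁ := by
  rw [gammaVal, gammaValW, ← boundary, boundary_singleton_erase h, Finset.sum_singleton, eps,
    descW, Finset.inter_univ]

lemma gammaVal_insert (h : T.children u = {u₁}) (ξ : ℚ) {B : Finset V} (hu₁ : u₁ ∈ B)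
    (hsub : B ⊆ T.desc u₁) : T.gammaVal ξ u (insert u B) = T.gammaVal ξ u₁ B := by
  rw [gammaVal, gammaValW, ← boundary, boundary_insert_erase h hu₁ hsub]
  rfl

lemma subset_desc_and_disjoint_insert_iff (h : T.children u = {u₁}) {B C : Finset V} :
    C ⊆ T.desc u ∧ Disjoint (insert u B) C ↔ C ⊆ T.desc u₁ ∧ Disjoint B C := by
  rw [desc_eq_insert_desc_child h, Finset.disjoint_insert_left]
  constructor
  · rintro ⟨hsub, hu, hB⟩
    exact ⟨(Finset.subset_insert_iff_of_notMem hu).mp hsub, hB⟩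
  · rintro ⟨hsub, hB⟩
    exact ⟨hsub.trans (Finset.subset_insert u _), fun hu => notMem_desc_child h (hsub hu), hB⟩

lemma desc_sdiff_insert_union (h : T.children u = {u₁}) (B X : Finset V) :
    T.desc u \ (insert u B ∪ X) = T.desc u₁ \ (B ∪ X) := by
  rw [desc_eq_insert_desc_child h, Finset.insert_union, Finset.insert_sdiff_insert,
    Finset.sdiff_insert_of_notMem (notMem_desc_child h)]

lemma inC_cons_singleton_iff (h : T.children u = {u₁}) {ξ : ℚ} {n l : ℕ}
    {C : Fin n → Finset V} :
    T.inC ξ u (Fin.cons {u} C : Fin (n + 1) → Finset V) l ↔ T.muWitness ξ u₁ C l := by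
  have hu : u ∈ T.desc u := mem_desc.mpr (below_refl u)
  rw [← insert_empty_eq u, inC_cons_iff, desc_sdiff_insert_union h, muWitness_iff]
  simp only [subset_desc_and_disjoint_insert_iff h, Finset.disjoint_empty_left, and_true,
    Finset.empty_union]
  simp [hu, connectedIn_singleton]

lemma inC_cons_insert_iff (h : T.children u = {u₁}) {ξ : ℚ} {n l : ℕ} {B : Finset V}
    {C : Fin n → Finset V} (hu₁ : u₁ ∈ B) (hsub : B ⊆ T.desc u₁) :
    T.inC ξ u (Fin.cons (insert u B) C : Fin (n + 1) → Finset V) l ↔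
      T.inC ξ u₁ (Fin.cons B C : Fin (n + 1) → Finset V) l := by
  have hsub' : insert u B ⊆ T.desc u := by
    rw [desc_eq_insert_desc_child h]
    exact Finset.insert_subset_insert u hsub
  rw [inC_cons_iff, inC_cons_iff, desc_sdiff_insert_union h]
  simp only [subset_desc_and_disjoint_insert_iff h, connectedIn_insert_iff h hu₁ hsub]
  simp [hu₁, hsub, hsub']

lemma gammaValues_of_children_eq (h : T.children u = {u₁}) (ξ : ℚ) (n l : ℕ) :
    T.gammaValues ξ u n l = {q | T.mu ξ u₁ n l ∧ q = T.eps ξ u₁} ∪ T.gammaValues ξ u₁ n l := by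
  ext q
  constructor
  · rintro ⟨A₀, C, hA, rfl⟩
    obtain ⟨hu, hsub, hconn⟩ := (inC_cons_iff.mp hA).1
    by_cases hu₁ : u₁ ∈ A₀
    · have hsub' : A₀.erase u ⊆ T.desc u₁ :=
        Finset.subset_insert_iff.mp (desc_eq_insert_desc_child h ▸ hsub)
      have hu₁' : u₁ ∈ A₀.erase u :=
        Finset.mem_erase.mpr ⟨(parent_eq_and_ne_of_children_eq h).2, hu₁⟩
      rw [← Finset.insert_erase hu] at hA ⊢
      exact Or.inr ⟨A₀.erase u, C, (inC_cons_insert_iff h hu₁' hsub').mp hA,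
        gammaVal_insert h ξ hu₁' hsub'⟩
    · obtain rfl := eq_singleton_of_child_notMem h hconn hu hsub hu₁
      exact Or.inl ⟨⟨C, (inC_cons_singleton_iff h).mp hA⟩, gammaVal_singleton h ξ⟩
  · rintro (⟨⟨C, hC⟩, rfl⟩ | ⟨B, C, hB, rfl⟩)
    · exact ⟨{u}, C, (inC_cons_singleton_iff h).mpr hC, (gammaVal_singleton h ξ).symm⟩
    · obtain ⟨hu₁, hsub, -⟩ := (inC_cons_iff.mp hB).1
      exact ⟨insert u B, C, (inC_cons_insert_iff h hu₁ hsub).mpr hB,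
        (gammaVal_insert h ξ hu₁ hsub).symm⟩

end UniqueChild

end RTree

theorem stmt13_general {V : Type} [Fintype V] [DecidableEq V] (T : RTree V)
    (ξ : ℚ) (u u₁ : V)
    (hchild : T.parent u₁ = u ∧ u₁ ≠ u)
    (honly : ∀ v : V, T.parent v = u → v ≠ u → v = u₁)
    (k l : ℕ) (hk : 1 ≤ k) :
    (T.mu ξ u₁ (k - 1) l →
      T.Gamma ξ u k l = min (((T.eps ξ u₁ : ℚ) : ℝ) : EReal) (T.Gamma ξ u₁ k l)) ∧
    (¬ T.mu ξ u₁ (k - 1) l → T.Gamma ξ u k l = T.Gamma ξ u₁ k l) := by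
  have h : T.children u = {u₁} := RTree.children_eq_singleton_iff.mpr fun v =>
    ⟨fun hv => honly v hv.1 hv.2, by rintro rfl; exact hchild⟩
  obtain ⟨n, rfl⟩ := Nat.exists_eq_add_of_le' hk
  simp only [Nat.add_sub_cancel, RTree.Gamma_succ, RTree.gammaValues_of_children_eq h,
    Set.image_union]
  exact ⟨fun hmu => by simp [hmu], fun hmu => by simp [hmu]⟩

/-- base of Lemma 2: if `u` has the single child `u₁`, then
`Γ_ξ(u,k,l)` equals `min{ξ·ω(T_{u₁}) + c(uu₁), Γ_ξ(u₁,k,l)}` when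
`μ_ξ(u₁,k−1,l) = 1`, and `Γ_ξ(u₁,k,l)` otherwise. -/
theorem stmt13 {V : Type} [Fintype V] [DecidableEq V] (T : RTree V)
    (ξ : ℚ) (hξ : 0 ≤ ξ) (u u₁ : V)
    (hchild : T.parent u₁ = u ∧ u₁ ≠ u)
    (honly : ∀ v : V, T.parent v = u → v ≠ u → v = u₁)
    (k l : ℕ) (hk : 1 ≤ k) :
    (T.mu ξ u₁ (k - 1) l →
      T.Gamma ξ u k l = min (((T.eps ξ u₁ : ℚ) : ℝ) : EReal) (T.Gamma ξ u₁ k l)) ∧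
    (¬ T.mu ξ u₁ (k - 1) l → T.Gamma ξ u k l = T.Gamma ξ u₁ k l) :=
  stmt13_general T ξ u u₁ hchild honly k l hk
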